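/- The TriAT-style color refinement is strictly more expressive than the 1-WL test: TriAT refinement distinguishes the disjoint union of two triangles from the 6-cycle (since in the former every vertex has an edge among its neighbors, in the latter none does), while 1-WL does not distinguish them. -/

import Mathlib

/-!
Both graphs are 2-regular on six vertices, and on a `d`-regular graph 1-WL never splits the
initial uniform coloring: every vertex gets the same color in every round. TriAT
refinement, in its first round, records the adjacent pairs among the neighbors of a vertex; this
record is nonempty for every vertex of a triangle and empty for every vertex of the triangle-free
6-cycle.
-/

open SimpleGraph

def WLColor : ℕ → Type
  | 0 => Unit
  | n + 1 => WLColor n × Multiset (WLColor n)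

/-- 1-WL refinement: `c'(u) = (c(u), {{c(v) : v ∈ N(u)}})`. -/
def wlColoring {V : Type} [Fintype V] (G : SimpleGraph V) [DecidableRel G.Adj] :
    (n : ℕ) → V → WLColor n
  | 0, _ => ()
  | n + 1, u => (wlColoring G n u, (G.neighborFinset u).val.map (wlColoring G n))

def TriColor : ℕ → Type
  | 0 => Unit
  | n + 1 => TriColor n × Multiset (TriColor n) × Multiset (TriColor n × TriColor n)

/-- TriAT refinement: additionally aggregates the multiset of color-pairs of
adjacent pairs of neighbors. -/
def triColoring {V : Type} [Fintype V] [DecidableEq V]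
    (G : SimpleGraph V) [DecidableRel G.Adj] :
    (n : ℕ) → V → TriColor n
  | 0, _ => ()
  | n + 1, u =>
      (triColoring G n u,
       (G.neighborFinset u).val.map (triColoring G n),
       (((G.neighborFinset u) ×ˢ (G.neighborFinset u)).filter
          (fun p => G.Adj p.1 p.2)).val.map
         (fun p => (triColoring G n p.1, triColoring G n p.2)))

/-- Two disjoint triangles. -/
def TwoTriangles : SimpleGraph (Fin 6) where
  Adj i j := i ≠ j ∧ (i : ℕ) / 3 = (j : ℕ) / 3
  symm := ⟨fun _ _ h => ⟨h.1.symm, h.2.symm⟩⟩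
  loopless := ⟨fun _ h => h.1 rfl⟩

instance : DecidableRel TwoTriangles.Adj :=
  fun i j => inferInstanceAs (Decidable (i ≠ j ∧ (i : ℕ) / 3 = (j : ℕ) / 3))

/-- A 6-cycle. -/
def SixCycle : SimpleGraph (ZMod 6) where
  Adj i j := i - j = 1 ∨ j - i = 1
  symm := ⟨fun _ _ h => h.symm⟩
  loopless := ⟨fun i h => by simp only [sub_self] at h; exact absurd h (by decide)⟩

instance : DecidableRel SixCycle.Adj :=
  fun i j => inferInstanceAs (Decidable (i - j = 1 ∨ j - i = 1))

def wlRegularColor (d : ℕ) : (n : ℕ) → WLColor n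
  | 0 => ()
  | n + 1 => (wlRegularColor d n, Multiset.replicate d (wlRegularColor d n))

section WL

variable {V : Type} [Fintype V] {G : SimpleGraph V} [DecidableRel G.Adj] {d : ℕ}

theorem wlColoring_eq_wlRegularColor (hG : G.IsRegularOfDegree d) (n : ℕ) (u : V) :
    wlColoring G n u = wlRegularColor d n := by
  induction n generalizing u with
  | zero => rfl
  | succ n ih =>
    have hdeg : (G.neighborFinset u).val.card = d := hG.degree_eq u
    rw [wlColoring, wlRegularColor, ih, Multiset.map_congr rfl fun v _ => ih v,
      Multiset.map_const', hdeg]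

theorem map_univ_wlColoring_of_isRegularOfDegree (hG : G.IsRegularOfDegree d) (n : ℕ) :
    Finset.univ.val.map (wlColoring G n) =
      Multiset.replicate (Fintype.card V) (wlRegularColor d n) := by
  rw [Multiset.map_congr rfl fun u _ => wlColoring_eq_wlRegularColor hG n u,
    Multiset.map_const']
  rfl

theorem map_univ_wlColoring_eq_of_isRegularOfDegree {W : Type} [Fintype W] {H : SimpleGraph W}
    [DecidableRel H.Adj] (hG : G.IsRegularOfDegree d) (hH : H.IsRegularOfDegree d)
    (hcard : Fintype.card V = Fintype.card W) (n : ℕ) :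
    Finset.univ.val.map (wlColoring G n) = Finset.univ.val.map (wlColoring H n) := by
  rw [map_univ_wlColoring_of_isRegularOfDegree hG, map_univ_wlColoring_of_isRegularOfDegree hH,
    hcard]

end WL

section TriAT

variable {V : Type} [Fintype V] [DecidableEq V] {G : SimpleGraph V} [DecidableRel G.Adj]

theorem triColoring_one_snd_snd_eq_zero_iff (u : V) :
    (triColoring G 1 u).2.2 = 0 ↔ ∀ v w, G.Adj u v → G.Adj u w → ¬G.Adj v w := by
  simp only [triColoring, Multiset.map_eq_zero, Finset.val_eq_zero, Finset.filter_eq_empty_iff,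
    Finset.mem_product, mem_neighborFinset, and_imp, Prod.forall]

theorem map_univ_triColoring_one_ne_of_cliqueFree {W : Type} [Fintype W] [DecidableEq W]
    {H : SimpleGraph W} [DecidableRel H.Adj] {u v w : V} (huv : G.Adj u v) (huw : G.Adj u w)
    (hvw : G.Adj v w) (hH : H.CliqueFree 3) :
    Finset.univ.val.map (triColoring G 1) ≠ Finset.univ.val.map (triColoring H 1) := by
  intro h
  have hu : triColoring G 1 u ∈ Finset.univ.val.map (triColoring H 1) :=
    h ▸ Multiset.mem_map_of_mem _ (Finset.mem_univ u)
  obtain ⟨x, -, hx⟩ := Multiset.mem_map.1 hu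
  have hx_empty : (triColoring H 1 x).2.2 = 0 :=
    (triColoring_one_snd_snd_eq_zero_iff x).2 fun a b hxa hxb hab =>
      hH {x, a, b} (is3Clique_triple_iff.2 ⟨hxa, hxb, hab⟩)
  rw [hx] at hx_empty
  exact (triColoring_one_snd_snd_eq_zero_iff u).1 hx_empty v w huv huw hvw

end TriAT

theorem twoTriangles_isRegularOfDegree_two : TwoTriangles.IsRegularOfDegree 2 := by
  unfold IsRegularOfDegree; decide

theorem sixCycle_isRegularOfDegree_two : SixCycle.IsRegularOfDegree 2 := by
  unfold IsRegularOfDegree; decide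

theorem sixCycle_cliqueFree_three : SixCycle.CliqueFree 3 := by
  intro s hs
  obtain ⟨a, b, c, hab, hac, hbc, -⟩ := is3Clique_iff.1 hs
  revert a b c
  decide

/-- TriAT-style refinement is strictly more expressive than the 1-WL test:
1-WL does not distinguish two disjoint triangles from the 6-cycle (the multisets
of colors agree at every round), but TriAT refinement does distinguish them
(at some round the multisets of TriAT colors differ). -/
theorem triat_strictly_more_expressive_than_wl :
    (∀ n : ℕ,
      (Finset.univ.val.map (wlColoring TwoTriangles n)) =
        (Finset.univ.val.map (wlColoring SixCycle n))) ∧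
    (∃ n : ℕ,
      (Finset.univ.val.map (triColoring TwoTriangles n)) ≠
        (Finset.univ.val.map (triColoring SixCycle n))) :=
  ⟨map_univ_wlColoring_eq_of_isRegularOfDegree twoTriangles_isRegularOfDegree_two
      sixCycle_isRegularOfDegree_two rfl,
    1, map_univ_triColoring_one_ne_of_cliqueFree (u := 0) (v := 1) (w := 2) (by decide)
      (by decide) (by decide) sixCycle_cliqueFree_three⟩
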